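/- Let G be a connected finite simple graph on n vertices and let r_G := β(G)^{dia(G)}/(2n). Then the polynomial z ↦ I(G,z) is injective on the open disc D(β(G), r_G/2) in the complex plane; in particular, β(G) is the unique root of I(G,z) in this disc. -/

import Mathlib

/-!
Write `I_A` for the independence polynomial of the subgraph induced on `A`, and `N[v]` for the
closed neighbourhood of `v`. Adding a vertex `v ∉ A` gives `I_{A ∪ {v}} = I_A - z I_{A \ N[v]}`,
and differentiating gives `I_A' = -∑_{v ∈ A} I_{A \ N[v]}`.

The smallest root `β` of `I_V` is also the least nonnegative root of all the `I_A`, so every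
`I_A(β)` is nonnegative. The deletion recurrence then makes `A ↦ I_A(β)` antitone and, followed
along a shortest path, gives `β ^ dia(G) I_{A \ N[v]}(β) ≤ I_A(β)` whenever `A` misses some
closed neighbourhood. Iterating the derivative identity yields
`|I_V^{(k)}(β)| ≤ (n / β ^ dia(G)) ^ (k - 1) |I_V'(β)|`, with `I_V'(β) < 0` by connectivity.
On the disc of radius `β ^ dia(G) / (4n)` the Taylor expansion of `I_V` at `β` is therefore
dominated by its linear term, and a polynomial with this property is injective there.
-/

open Polynomial

open scoped Classical in
/-- `indPolyOn G A` is the independence polynomial (over `ℝ`) of the subgraph of `G`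
induced on the vertex set `A`: the sum of `(-1)^|s| • X^|s|` over all independent
sets `s ⊆ A` of `G`.  Equivalently it is `∑ k (-1)^k a_k z^k` where `a_k` is the
number of independent sets of size `k` of the induced subgraph `G[A]`. -/
noncomputable def indPolyOn {V : Type*} [Fintype V] (G : SimpleGraph V) (A : Set V) :
    Polynomial ℝ :=
  ∑ s ∈ Finset.univ.filter
      (fun s : Finset V => ↑s ⊆ A ∧ ∀ u ∈ s, ∀ v ∈ s, ¬ G.Adj u v),
    ((-1 : ℝ) ^ s.card) • (X : Polynomial ℝ) ^ s.card

/-- The independence polynomial `I(G,z)` of `G`. -/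
noncomputable def indPoly {V : Type*} [Fintype V] (G : SimpleGraph V) : Polynomial ℝ :=
  indPolyOn G Set.univ

open Finset

open scoped Classical

lemma sum_range_div_two_pow_succ (c : ℝ) (n : ℕ) :
    ∑ k ∈ range n, c / 2 ^ (k + 1) = c - c / 2 ^ n := by
  induction n with
  | zero => simp
  | succ n ih =>
    rw [sum_range_succ, ih, pow_succ]
    field_simp
    ring

namespace Polynomial

lemma eval_sub_eval_eq_mul_sum {R : Type*} [CommRing R] (q : R[X]) {n : ℕ}
    (hn : q.natDegree < n) (z w : R) :
    q.eval z - q.eval w =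
      (z - w) * ∑ k ∈ range n, q.coeff k * ∑ i ∈ range k, z ^ i * w ^ (k - 1 - i) := by
  rw [eval_eq_sum_range' hn, eval_eq_sum_range' hn, ← sum_sub_distrib, mul_sum]
  refine sum_congr rfl fun k _ => ?_
  rw [← mul_sub, ← geom_sum₂_mul]
  ring

variable {𝕜 : Type*} [NormedField 𝕜]

lemma norm_geom_sum₂_le {z w : 𝕜} {r : ℝ} (hz : ‖z‖ ≤ r) (hw : ‖w‖ ≤ r) (k : ℕ) :
    ‖∑ i ∈ range k, z ^ i * w ^ (k - 1 - i)‖ ≤ k * r ^ (k - 1) := by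
  have hr : 0 ≤ r := (norm_nonneg z).trans hz
  calc ‖∑ i ∈ range k, z ^ i * w ^ (k - 1 - i)‖
      ≤ ∑ i ∈ range k, r ^ (k - 1) := by
        refine (norm_sum_le _ _).trans (sum_le_sum fun i hi => ?_)
        rw [norm_mul, norm_pow, norm_pow,
          ← pow_mul_pow_sub r (Nat.le_sub_one_of_lt (mem_range.mp hi))]
        gcongr
    _ = k * r ^ (k - 1) := by simp

-- The divided difference `(q z - q w) / (z - w)` differs from `q.coeff 1` by at most
-- `∑ₖ ‖q.coeff 1‖ / 2 ^ (k + 1) < ‖q.coeff 1‖`.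
theorem injOn_eval_ball_zero (q : 𝕜[X]) {r : ℝ} (h1 : q.coeff 1 ≠ 0)
    (hk : ∀ k, 2 ≤ k → k * ‖q.coeff k‖ * r ^ (k - 1) ≤ ‖q.coeff 1‖ / 2 ^ (k - 1)) :
    Set.InjOn q.eval (Metric.ball 0 r) := by
  intro z hz w hw hzw
  rw [mem_ball_zero_iff] at hz hw
  set h : ℕ → 𝕜 := fun k => ∑ i ∈ range k, z ^ i * w ^ (k - 1 - i)
  have hsplit : ∑ k ∈ range (q.natDegree + 2), q.coeff k * h k =
      ∑ k ∈ range q.natDegree, q.coeff (k + 2) * h (k + 2) + q.coeff 1 := by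
    simp [sum_range_succ', h]
  have hterm (k : ℕ) : ‖q.coeff (k + 2) * h (k + 2)‖ ≤ ‖q.coeff 1‖ / 2 ^ (k + 1) :=
    calc ‖q.coeff (k + 2) * h (k + 2)‖ ≤ ‖q.coeff (k + 2)‖ * ((k + 2 : ℕ) * r ^ (k + 1)) := by
          rw [norm_mul]
          gcongr
          exact norm_geom_sum₂_le hz.le hw.le (k + 2)
      _ = (k + 2 : ℕ) * ‖q.coeff (k + 2)‖ * r ^ (k + 1) := by ring
      _ ≤ ‖q.coeff 1‖ / 2 ^ (k + 1) := hk (k + 2) (by omega)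
  have htail : ‖∑ k ∈ range q.natDegree, q.coeff (k + 2) * h (k + 2)‖ < ‖q.coeff 1‖ :=
    calc ‖∑ k ∈ range q.natDegree, q.coeff (k + 2) * h (k + 2)‖
        ≤ ∑ k ∈ range q.natDegree, ‖q.coeff 1‖ / 2 ^ (k + 1) :=
          (norm_sum_le _ _).trans (sum_le_sum fun k _ => hterm k)
      _ = ‖q.coeff 1‖ - ‖q.coeff 1‖ / 2 ^ q.natDegree := sum_range_div_two_pow_succ _ _
      _ < ‖q.coeff 1‖ := sub_lt_self _ (div_pos (norm_pos_iff.mpr h1) (by positivity))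
  have hquot : ∑ k ∈ range (q.natDegree + 2), q.coeff k * h k ≠ 0 := by
    intro h0
    rw [hsplit, add_eq_zero_iff_eq_neg] at h0
    rw [h0, norm_neg] at htail
    exact lt_irrefl _ htail
  have hdiff := eval_sub_eval_eq_mul_sum q (Nat.lt_add_of_pos_right two_pos) z w
  rw [show q.eval z = q.eval w from hzw, sub_self, eq_comm, mul_eq_zero] at hdiff
  exact sub_eq_zero.mp (hdiff.resolve_right hquot)

theorem injOn_eval_ball (p : 𝕜[X]) (a : 𝕜) {r : ℝ} (h1 : (taylor a p).coeff 1 ≠ 0)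
    (hk : ∀ k, 2 ≤ k →
      k * ‖(taylor a p).coeff k‖ * r ^ (k - 1) ≤ ‖(taylor a p).coeff 1‖ / 2 ^ (k - 1)) :
    Set.InjOn p.eval (Metric.ball a r) := by
  intro z hz w hw hzw
  have hball : ∀ x ∈ Metric.ball a r, x - a ∈ Metric.ball 0 r := fun x hx => by
    simpa [dist_eq_norm] using hx
  refine sub_left_injective (injOn_eval_ball_zero (taylor a p) h1 hk (hball z hz) (hball w hw) ?_)
  simpa [taylor_eval] using hzw

open Nat in
lemma taylor_coeff_eq_eval_iterate_derivative_div {K : Type*} [Field K] [CharZero K]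
    (p : K[X]) (a : K) (k : ℕ) :
    (taylor a p).coeff k = (derivative^[k] p).eval a / k ! := by
  rw [taylor_coeff, eq_div_iff (cast_ne_zero.mpr (factorial_ne_zero k)),
    ← factorial_smul_hasseDeriv, LinearMap.smul_apply, eval_smul, nsmul_eq_mul, mul_comm]

open Nat in
theorem injOn_aeval_ball_of_abs_iterate_derivative_le (p : ℝ[X]) (a : ℝ) {K r : ℝ} (hK : 0 ≤ K)
    (hr : 0 ≤ r) (hKr : K * r ≤ 1 / 2) (h1 : (derivative p).eval a ≠ 0)
    (hbound : ∀ m, |(derivative^[m + 1] p).eval a| ≤ K ^ m * |(derivative p).eval a|) :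
    Set.InjOn (fun z : ℂ => aeval z p) (Metric.ball (a : ℂ) r) := by
  have hcoeff (k : ℕ) : (taylor (a : ℂ) (p.map (algebraMap ℝ ℂ))).coeff k =
      (((derivative^[k] p).eval a / k ! : ℝ) : ℂ) := by
    rw [← Complex.coe_algebraMap, ← map_taylor, coeff_map,
      taylor_coeff_eq_eval_iterate_derivative_div, Complex.coe_algebraMap]
  simp_rw [← eval_map_algebraMap]
  refine injOn_eval_ball _ _ (by simpa [hcoeff] using h1) fun k hk => ?_
  obtain ⟨m, rfl⟩ : ∃ m, k = m + 1 := ⟨k - 1, by omega⟩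
  simp only [hcoeff, Complex.norm_real, Real.norm_eq_abs, abs_div, Nat.abs_cast,
    Nat.add_sub_cancel, Function.iterate_one, factorial_one, cast_one, div_one]
  calc ((m + 1 : ℕ) : ℝ) * (|(derivative^[m + 1] p).eval a| / ((m + 1) ! : ℕ)) * r ^ m
      = |(derivative^[m + 1] p).eval a| * r ^ m / m ! := by
        rw [factorial_succ, cast_mul]
        field_simp
    _ ≤ |(derivative^[m + 1] p).eval a| * r ^ m :=
        div_le_self (by positivity) (one_le_cast.mpr (factorial_pos m))
    _ ≤ K ^ m * |(derivative p).eval a| * r ^ m := by gcongr; exact hbound m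
    _ = (K * r) ^ m * |(derivative p).eval a| := by ring
    _ ≤ (1 / 2) ^ m * |(derivative p).eval a| := by gcongr
    _ = |(derivative p).eval a| / 2 ^ m := by rw [one_div_pow]; ring

end Polynomial

namespace SimpleGraph

variable {V : Type*} [Fintype V] (G : SimpleGraph V)

noncomputable def closedNeighborSet (v : V) : Set V := insert v (G.neighborSet v)

noncomputable def indepSetsOn (A : Set V) : Finset (Finset V) :=
  univ.filter fun s : Finset V => ↑s ⊆ A ∧ ∀ u ∈ s, ∀ v ∈ s, ¬ G.Adj u v

variable {G}

lemma mem_indepSetsOn {A : Set V} {s : Finset V} :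
    s ∈ G.indepSetsOn A ↔ ↑s ⊆ A ∧ ∀ u ∈ s, ∀ v ∈ s, ¬ G.Adj u v := by
  simp [indepSetsOn]

lemma filter_notMem_indepSetsOn (A : Set V) (v : V) :
    (G.indepSetsOn A).filter (v ∉ ·) = G.indepSetsOn (A \ {v}) := by
  ext s
  simp only [mem_filter, mem_indepSetsOn, Set.subset_sdiff, Set.disjoint_singleton_right,
    mem_coe]
  tauto

lemma sum_filter_mem_indepSetsOn {M : Type*} [AddCommMonoid M] (f : ℕ → M) {A : Set V} {v : V}
    (hv : v ∈ A) :
    ∑ s ∈ (G.indepSetsOn A).filter (v ∈ ·), f s.card =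
      ∑ s ∈ G.indepSetsOn (A \ G.closedNeighborSet v), f (s.card + 1) := by
  have hv' (s : Finset V) (hs : s ∈ G.indepSetsOn (A \ G.closedNeighborSet v)) : v ∉ s :=
    fun h => ((mem_indepSetsOn.mp hs).1 h).2 (Set.mem_insert v _)
  symm
  refine sum_nbij' (insert v) (fun s => s.erase v) (fun s hs => ?_) (fun s hs => ?_)
    (fun s hs => erase_insert (hv' s hs)) (fun s hs => insert_erase (mem_filter.mp hs).2)
    (fun s hs => by rw [card_insert_of_notMem (hv' s hs)])
  · obtain ⟨hsA, hind⟩ := mem_indepSetsOn.mp hs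
    refine mem_filter.mpr ⟨mem_indepSetsOn.mpr ⟨?_, ?_⟩, mem_insert_self v s⟩
    · rw [coe_insert, Set.insert_subset_iff]
      exact ⟨hv, fun u hu => (hsA hu).1⟩
    · have hnadj (u) (hu : u ∈ s) : ¬ G.Adj v u := fun h => (hsA hu).2 (Set.mem_insert_of_mem v h)
      intro u hu w hw
      rcases mem_insert.mp hu with rfl | hu' <;> rcases mem_insert.mp hw with rfl | hw'
      · exact G.irrefl
      · exact hnadj w hw'
      · exact fun h => hnadj u hu' h.symm
      · exact hind u hu' w hw'
  · obtain ⟨hs, hvs⟩ := mem_filter.mp hs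
    obtain ⟨hsA, hind⟩ := mem_indepSetsOn.mp hs
    refine mem_indepSetsOn.mpr ⟨fun u hu => ⟨hsA (mem_of_mem_erase hu), ?_⟩,
      fun u hu w hw => hind u (mem_of_mem_erase hu) w (mem_of_mem_erase hw)⟩
    rintro (rfl | h)
    · exact ne_of_mem_erase hu rfl
    · exact hind v hvs u (mem_of_mem_erase hu) h

end SimpleGraph

section IndependencePolynomial

open SimpleGraph

variable {V : Type*} [Fintype V] {G : SimpleGraph V}

lemma indPolyOn_eq_sum (A : Set V) :
    indPolyOn G A = ∑ s ∈ G.indepSetsOn A, ((-1 : ℝ) ^ s.card) • (X : ℝ[X]) ^ s.card :=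
  rfl

lemma indPolyOn_insert {A : Set V} {v : V} (hv : v ∉ A) :
    indPolyOn G (insert v A) = indPolyOn G A - X * indPolyOn G (A \ G.closedNeighborSet v) := by
  have hdiff : insert v A \ G.closedNeighborSet v = A \ G.closedNeighborSet v :=
    Set.insert_sdiff_of_mem _ (Set.mem_insert v _)
  rw [indPolyOn_eq_sum, ← sum_filter_not_add_sum_filter _ (v ∈ ·),
    filter_notMem_indepSetsOn, Set.insert_sdiff_self_of_notMem hv,
    sum_filter_mem_indepSetsOn (fun k => ((-1 : ℝ) ^ k) • (X : ℝ[X]) ^ k) (Set.mem_insert v A),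
    hdiff, indPolyOn_eq_sum, indPolyOn_eq_sum, mul_sum, sub_eq_add_neg, ← sum_neg_distrib]
  congr 1
  refine sum_congr rfl fun s _ => ?_
  simp only [pow_succ, smul_eq_C_mul, map_mul, map_neg, map_one, map_pow]
  ring

lemma indPolyOn_empty : indPolyOn G ∅ = 1 := by
  have : G.indepSetsOn ∅ = {∅} := by
    ext s
    simp +contextual [mem_indepSetsOn]
  simp [indPolyOn_eq_sum, this]

lemma derivative_indPolyOn (A : Set V) :
    derivative (indPolyOn G A) = -∑ v ∈ A.toFinset, indPolyOn G (A \ G.closedNeighborSet v) := by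
  have hterm (s : Finset V) : derivative (((-1 : ℝ) ^ s.card) • (X : ℝ[X]) ^ s.card) =
      ∑ _v ∈ s, ((-1 : ℝ) ^ s.card) • (X : ℝ[X]) ^ (s.card - 1) := by
    rw [derivative_smul, derivative_X_pow, sum_const, nsmul_eq_mul, smul_eq_C_mul,
      smul_eq_C_mul, C_eq_natCast]
    ring
  have hswap : ∀ s v, s ∈ G.indepSetsOn A ∧ v ∈ s ↔
      s ∈ (G.indepSetsOn A).filter (v ∈ ·) ∧ v ∈ A.toFinset := fun s v => by
    rw [mem_filter, Set.mem_toFinset]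
    exact ⟨fun h => ⟨h, (mem_indepSetsOn.mp h.1).1 h.2⟩, fun h => h.1⟩
  rw [indPolyOn_eq_sum, derivative_sum, sum_congr rfl fun s _ => hterm s, sum_comm' hswap,
    ← sum_neg_distrib]
  refine sum_congr rfl fun v hv => ?_
  rw [sum_filter_mem_indepSetsOn (fun k => ((-1 : ℝ) ^ k) • (X : ℝ[X]) ^ (k - 1))
    (Set.mem_toFinset.mp hv), indPolyOn_eq_sum, ← sum_neg_distrib]
  refine sum_congr rfl fun s _ => ?_
  rw [Nat.add_sub_cancel, pow_succ, mul_neg_one, neg_smul]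

lemma eval_indPolyOn (A : Set V) (x : ℝ) :
    (indPolyOn G A).eval x = ∑ s ∈ G.indepSetsOn A, (-x) ^ s.card := by
  rw [indPolyOn_eq_sum, eval_finsetSum]
  refine sum_congr rfl fun s _ => ?_
  rw [eval_smul, eval_pow, eval_X, smul_eq_mul, ← mul_pow, neg_one_mul]

lemma one_le_eval_indPolyOn {x : ℝ} (hx : x ≤ 0) (A : Set V) : 1 ≤ (indPolyOn G A).eval x := by
  have hempty : ∅ ∈ G.indepSetsOn A := mem_indepSetsOn.mpr ⟨by simp, by simp⟩
  rw [eval_indPolyOn]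
  calc (1 : ℝ) = (-x) ^ (∅ : Finset V).card := by simp
    _ ≤ _ := single_le_sum (fun s _ => pow_nonneg (neg_nonneg.mpr hx) _) hempty

lemma indPolyOn_singleton (v : V) : indPolyOn G {v} = 1 - X := by
  rw [Set.singleton_def, indPolyOn_insert (Set.notMem_empty v), Set.empty_sdiff, indPolyOn_empty,
    mul_one]

lemma eval_indPolyOn_insert {A : Set V} {v : V} (hv : v ∉ A) (x : ℝ) :
    (indPolyOn G (insert v A)).eval x =
      (indPolyOn G A).eval x - x * (indPolyOn G (A \ G.closedNeighborSet v)).eval x := by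
  rw [indPolyOn_insert hv, eval_sub, eval_mul, eval_X]

section NonnegPoint

variable {x : ℝ}

lemma mul_eval_indPolyOn_sdiff_le (hnn : ∀ A : Set V, 0 ≤ (indPolyOn G A).eval x) {A : Set V}
    {v : V} (hv : v ∉ A) :
    x * (indPolyOn G (A \ G.closedNeighborSet v)).eval x ≤ (indPolyOn G A).eval x := by
  have := hnn (insert v A)
  rw [eval_indPolyOn_insert hv] at this
  linarith

lemma eval_indPolyOn_le_of_subset (hx : 0 ≤ x) (hnn : ∀ A : Set V, 0 ≤ (indPolyOn G A).eval x)
    {A B : Set V} (hBA : B ⊆ A) : (indPolyOn G A).eval x ≤ (indPolyOn G B).eval x := by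
  have key : (indPolyOn G (B ∪ (A \ B))).eval x ≤ (indPolyOn G B).eval x := by
    refine Set.Finite.induction_on_subset
      (motive := fun t _ => (indPolyOn G (B ∪ t)).eval x ≤ (indPolyOn G B).eval x)
      (A \ B) (Set.toFinite _) (by simp) ?_
    intro a t ha _ hat ih
    have hat' : a ∉ B ∪ t := fun h => h.elim ha.2 hat
    rw [Set.union_insert, eval_indPolyOn_insert hat']
    have := mul_nonneg hx (hnn ((B ∪ t) \ G.closedNeighborSet a))
    linarith
  rwa [Set.union_sdiff_cancel hBA] at key

end NonnegPoint

variable (G) in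
def inducedIndPolyRoots : Set ℝ := {x | 0 ≤ x ∧ ∃ A : Set V, (indPolyOn G A).eval x = 0}

lemma one_mem_inducedIndPolyRoots [Nonempty V] : 1 ∈ inducedIndPolyRoots G :=
  ⟨zero_le_one, {Classical.arbitrary V}, by simp [indPolyOn_singleton]⟩

lemma exists_isLeast_inducedIndPolyRoots [Nonempty V] :
    ∃ x, IsLeast (inducedIndPolyRoots G) x := by
  have hclosed : IsClosed (inducedIndPolyRoots G) := by
    have : inducedIndPolyRoots G = Set.Ici 0 ∩ ⋃ A : Set V, {x | (indPolyOn G A).eval x = 0} := by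
      ext x
      simp [inducedIndPolyRoots]
    rw [this]
    exact isClosed_Ici.inter <| isClosed_iUnion_of_finite fun A =>
      isClosed_eq (Polynomial.continuous _) continuous_const
  exact ⟨_, hclosed.isLeast_csInf ⟨1, one_mem_inducedIndPolyRoots⟩ ⟨0, fun x hx => hx.1⟩⟩

lemma eval_indPolyOn_nonneg_of_mem_lowerBounds {x : ℝ} (hx0 : 0 ≤ x)
    (hx : x ∈ lowerBounds (inducedIndPolyRoots G)) (A : Set V) :
    0 ≤ (indPolyOn G A).eval x := by
  by_contra! hneg
  obtain ⟨y, hy, hy0⟩ := intermediate_value_Icc' hx0 (indPolyOn G A).continuous.continuousOn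
    ⟨hneg.le, zero_le_one.trans (one_le_eval_indPolyOn le_rfl A)⟩
  obtain rfl : y = x := le_antisymm hy.2 (hx ⟨hy.1, A, hy0⟩)
  exact hneg.ne hy0

lemma pos_of_eval_indPoly_eq_zero {β : ℝ} (hβ : (indPoly G).eval β = 0) : 0 < β := by
  by_contra! h
  have := one_le_eval_indPolyOn (G := G) h Set.univ
  rw [← indPoly, hβ] at this
  linarith

lemma isLeast_inducedIndPolyRoots [Nonempty V] {β : ℝ}
    (hβ : IsLeast {x | (indPoly G).eval x = 0} β) : IsLeast (inducedIndPolyRoots G) β := by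
  obtain ⟨β₀, ⟨hβ₀, A₀, hA₀⟩, hβ₀low⟩ := exists_isLeast_inducedIndPolyRoots (G := G)
  have hnn := eval_indPolyOn_nonneg_of_mem_lowerBounds hβ₀ hβ₀low
  have hroot₀ : (indPoly G).eval β₀ = 0 :=
    le_antisymm (hA₀ ▸ eval_indPolyOn_le_of_subset hβ₀ hnn (Set.subset_univ A₀)) (hnn Set.univ)
  obtain rfl : β = β₀ :=
    le_antisymm (hβ.2 hroot₀) (hβ₀low ⟨(pos_of_eval_indPoly_eq_zero hβ.1).le, Set.univ, hβ.1⟩)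
  exact ⟨⟨hβ₀, A₀, hA₀⟩, hβ₀low⟩

lemma neg_one_pow_mul_eval_iterate_derivative_indPolyOn (m : ℕ) (A : Set V) (x : ℝ) :
    (-1) ^ (m + 1) * (derivative^[m + 1] (indPolyOn G A)).eval x =
      ∑ v ∈ A.toFinset, (-1) ^ m *
        (derivative^[m] (indPolyOn G (A \ G.closedNeighborSet v))).eval x := by
  rw [Function.iterate_succ_apply, derivative_indPolyOn, iterate_derivative_neg,
    iterate_derivative_sum, eval_neg, eval_finsetSum, mul_neg, mul_sum, ← sum_neg_distrib]
  refine sum_congr rfl fun v _ => ?_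
  ring

lemma eval_derivative_indPoly (x : ℝ) :
    (derivative (indPoly G)).eval x =
      -∑ v, (indPolyOn G (Set.univ \ G.closedNeighborSet v)).eval x := by
  simp [indPoly, derivative_indPolyOn, eval_finsetSum]

section Connected

variable {β : ℝ}

lemma pow_length_mul_eval_indPolyOn_le (hβ : 0 ≤ β)
    (hnn : ∀ A : Set V, 0 ≤ (indPolyOn G A).eval β) {u v : V} (W : G.Walk u v) {A : Set V}
    (hA : Disjoint A (G.closedNeighborSet u)) :
    β ^ W.length * (indPolyOn G (A \ G.closedNeighborSet v)).eval β ≤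
      (indPolyOn G A).eval β := by
  induction W generalizing A with
  | nil => simp [hA.sdiff_eq_left]
  | @cons u b v hadj W ih =>
    have hb : b ∉ A := Set.disjoint_right.mp hA (Set.mem_insert_of_mem u hadj)
    calc β ^ (W.cons hadj).length * (indPolyOn G (A \ G.closedNeighborSet v)).eval β
        ≤ β * (β ^ W.length *
            (indPolyOn G ((A \ G.closedNeighborSet b) \ G.closedNeighborSet v)).eval β) := by
          rw [Walk.length_cons, pow_succ', mul_assoc]
          gcongr
          exact eval_indPolyOn_le_of_subset hβ hnn (Set.sdiff_subset_sdiff_left Set.sdiff_subset)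
      _ ≤ β * (indPolyOn G (A \ G.closedNeighborSet b)).eval β := by
          gcongr
          exact ih Set.disjoint_sdiff_left
      _ ≤ (indPolyOn G A).eval β := mul_eval_indPolyOn_sdiff_le hnn hb

lemma pow_diam_mul_eval_indPolyOn_le (hconn : G.Connected) (hβ0 : 0 ≤ β) (hβ1 : β ≤ 1)
    (hnn : ∀ A : Set V, 0 ≤ (indPolyOn G A).eval β) {A : Set V} {u : V}
    (hA : Disjoint A (G.closedNeighborSet u)) (v : V) :
    β ^ G.diam * (indPolyOn G (A \ G.closedNeighborSet v)).eval β ≤ (indPolyOn G A).eval β := by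
  have := hconn.nonempty
  obtain ⟨W, hW⟩ := hconn.exists_walk_length_eq_dist u v
  have hdist : W.length ≤ G.diam := hW ▸ G.dist_le_diam (G.connected_iff_ediam_ne_top.mp hconn)
  calc β ^ G.diam * (indPolyOn G (A \ G.closedNeighborSet v)).eval β
      ≤ β ^ W.length * (indPolyOn G (A \ G.closedNeighborSet v)).eval β := by
        exact mul_le_mul_of_nonneg_right (pow_le_pow_of_le_one hβ0 hβ1 hdist) (hnn _)
    _ ≤ (indPolyOn G A).eval β := pow_length_mul_eval_indPolyOn_le hβ0 hnn W hA

lemma eval_indPolyOn_pos (hconn : G.Preconnected) (hβ : 0 < β)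
    (hnn : ∀ A : Set V, 0 ≤ (indPolyOn G A).eval β) {A : Set V} (hA : A ≠ Set.univ) :
    0 < (indPolyOn G A).eval β := by
  induction A using WellFoundedLT.induction with
  | _ A ih =>
  rcases A.eq_empty_or_nonempty with rfl | ⟨a, ha⟩
  · simp [indPolyOn_empty]
  obtain ⟨b, hb⟩ := (Set.ne_univ_iff_exists_notMem A).mp hA
  obtain ⟨d, -, hd₁, hd₂⟩ :=
    (hconn b a).some.exists_boundary_dart Aᶜ hb (Set.notMem_compl_iff.mpr ha)
  have hd₂' : d.snd ∈ A := Set.notMem_compl_iff.mp hd₂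
  have hlt : A \ G.closedNeighborSet d.fst < A :=
    (Set.ssubset_iff_of_subset Set.sdiff_subset).mpr
      ⟨d.snd, hd₂', fun h => h.2 (Set.mem_insert_of_mem _ d.adj)⟩
  have hne : A \ G.closedNeighborSet d.fst ≠ Set.univ := fun h =>
    (h.ge (Set.mem_univ d.fst)).2 (Set.mem_insert _ _)
  calc 0 < β * (indPolyOn G (A \ G.closedNeighborSet d.fst)).eval β := mul_pos hβ (ih _ hlt hne)
    _ ≤ (indPolyOn G A).eval β := mul_eval_indPolyOn_sdiff_le hnn hd₁

lemma neg_one_pow_mul_eval_iterate_derivative_indPolyOn_mem_Icc (hconn : G.Connected)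
    (hβ : 0 < β) (hβ1 : β ≤ 1) (hnn : ∀ A : Set V, 0 ≤ (indPolyOn G A).eval β) (m : ℕ)
    {A : Set V} {u : V} (hA : Disjoint A (G.closedNeighborSet u)) :
    (-1) ^ m * (derivative^[m] (indPolyOn G A)).eval β ∈
      Set.Icc 0 ((Fintype.card V / β ^ G.diam) ^ m * (indPolyOn G A).eval β) := by
  induction m generalizing A u with
  | zero => simpa using hnn A
  | succ m ih =>
    set K : ℝ := Fintype.card V / β ^ G.diam
    have hβd : 0 < β ^ G.diam := pow_pos hβ _
    rw [neg_one_pow_mul_eval_iterate_derivative_indPolyOn]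
    refine ⟨sum_nonneg fun v _ => (ih Set.disjoint_sdiff_left).1, ?_⟩
    have hstep (v : V) : (indPolyOn G (A \ G.closedNeighborSet v)).eval β ≤
        (indPolyOn G A).eval β / β ^ G.diam := by
      rw [le_div_iff₀ hβd, mul_comm]
      exact pow_diam_mul_eval_indPolyOn_le hconn hβ.le hβ1 hnn hA v
    have hterm : 0 ≤ K ^ m * ((indPolyOn G A).eval β / β ^ G.diam) := by
      have := hnn A
      positivity
    calc ∑ v ∈ A.toFinset, (-1) ^ m *
          (derivative^[m] (indPolyOn G (A \ G.closedNeighborSet v))).eval β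
        ≤ ∑ _v ∈ A.toFinset, K ^ m * ((indPolyOn G A).eval β / β ^ G.diam) :=
          sum_le_sum fun v _ => (ih Set.disjoint_sdiff_left).2.trans (by gcongr; exact hstep v)
      _ ≤ Fintype.card V * (K ^ m * ((indPolyOn G A).eval β / β ^ G.diam)) := by
          rw [sum_const, nsmul_eq_mul]
          gcongr
          exact card_le_univ _
      _ = K ^ (m + 1) * (indPolyOn G A).eval β := by
          rw [pow_succ]
          ring

lemma abs_eval_iterate_derivative_indPoly_le (hconn : G.Connected) (hβ : 0 < β) (hβ1 : β ≤ 1)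
    (hnn : ∀ A : Set V, 0 ≤ (indPolyOn G A).eval β) (m : ℕ) :
    |(derivative^[m + 1] (indPoly G)).eval β| ≤
      (Fintype.card V / β ^ G.diam) ^ m * -(derivative (indPoly G)).eval β := by
  have hbound (v : V) := neg_one_pow_mul_eval_iterate_derivative_indPolyOn_mem_Icc hconn hβ hβ1
    hnn m (A := Set.univ \ G.closedNeighborSet v) Set.disjoint_sdiff_left
  rw [← one_mul |_|, ← abs_neg_one_pow (m + 1), ← abs_mul, indPoly,
    neg_one_pow_mul_eval_iterate_derivative_indPolyOn, ← indPoly, eval_derivative_indPoly,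
    neg_neg, sum_congr (s₂ := univ) (by ext; simp) fun _ _ => rfl, mul_sum,
    abs_of_nonneg (sum_nonneg fun v _ => (hbound v).1)]
  exact sum_le_sum fun v _ => (hbound v).2

lemma eval_derivative_indPoly_neg (hconn : G.Preconnected) [Nonempty V] (hβ : 0 < β)
    (hnn : ∀ A : Set V, 0 ≤ (indPolyOn G A).eval β) : (derivative (indPoly G)).eval β < 0 := by
  rw [eval_derivative_indPoly, neg_lt_zero]
  refine sum_pos (fun v _ => eval_indPolyOn_pos hconn hβ hnn fun h => ?_) univ_nonempty
  exact (h.ge (Set.mem_univ v)).2 (Set.mem_insert _ _)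

end Connected

end IndependencePolynomial

/-- Let `G` be a connected graph on `n` vertices and
`r_G := β(G)^{dia(G)}/(2n)`.  Then `I(G,·)` is injective on the open disc
`D(β(G), r_G/2) ⊆ ℂ`; in particular `β(G)` is its unique root there. -/
theorem indPoly_injective_near_beta {V : Type*} [Fintype V]
    (G : SimpleGraph V) (hG : G.Connected)
    (β : ℝ) (hroot : (indPoly G).eval β = 0)
    (hmin : ∀ x : ℝ, (indPoly G).eval x = 0 → β ≤ x)
    (rG : ℝ) (hrG : rG = β ^ G.diam / (2 * Fintype.card V)) :
    Set.InjOn (fun z : ℂ => aeval z (indPoly G)) (Metric.ball (β : ℂ) (rG / 2)) ∧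
      ∀ z ∈ Metric.ball (β : ℂ) (rG / 2), aeval z (indPoly G) = 0 → z = (β : ℂ) := by
  have := hG.nonempty
  have hβ : 0 < β := pos_of_eval_indPoly_eq_zero hroot
  have hroots := isLeast_inducedIndPolyRoots ⟨hroot, hmin⟩
  have hnn := eval_indPolyOn_nonneg_of_mem_lowerBounds hβ.le hroots.2
  have hder := eval_derivative_indPoly_neg hG.preconnected hβ hnn
  have hβ1 : β ≤ 1 := hroots.2 one_mem_inducedIndPolyRoots
  have hn : (0 : ℝ) < Fintype.card V := Nat.cast_pos.mpr Fintype.card_pos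
  have hr : 0 < rG / 2 := by rw [hrG]; positivity
  have hKr : Fintype.card V / β ^ G.diam * (rG / 2) ≤ 1 / 2 := by
    rw [hrG]
    field_simp
    norm_num
  have hinj := injOn_aeval_ball_of_abs_iterate_derivative_le (indPoly G) β (by positivity) hr.le
    hKr hder.ne fun m => abs_of_neg hder ▸ abs_eval_iterate_derivative_indPoly_le hG hβ hβ1 hnn m
  have hrootℂ : aeval (β : ℂ) (indPoly G) = 0 := by
    rw [← Complex.coe_algebraMap, aeval_algebraMap_apply_eq_algebraMap_eval, hroot, map_zero]
  exact ⟨hinj, fun z hz hz0 => hinj hz (Metric.mem_ball_self hr) (hz0.trans hrootℂ.symm)⟩
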